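/- arXiv:2111.06645 — 7 statements merged into one kernel-verified Lean document; each statement's English description precedes it below -/
import Mathlib

section
/- Let γ = [[a,b],[c,d]] and γ' = [[a',b'],[c',d']] be elements of SL₂(ℤ), and for a matrix δ = [[p,q],[r,s]] ∈ SL₂(ℤ) and a rational number x = m/n in lowest terms (n > 0) with rx + s ≠ 0, define λ_δ(x) = r/(n(rm + sn)). Then for every rational x such that γ'x and (γγ')x are defined and differ from the relevant poles (i.e., x ≠ γ'⁻¹(∞) and x ≠ (γγ')⁻¹(∞)), one has λ_{γγ'}(x) = λ_γ(γ'x) + λ_{γ'}(x). -/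
/-- Möbius action of an element of `SL(2, ℤ)` on a rational number. -/
def moebius (δ : Matrix.SpecialLinearGroup (Fin 2) ℤ) (x : ℚ) : ℚ :=
  (((δ.1 0 0 : ℤ) : ℚ) * x + ((δ.1 0 1 : ℤ) : ℚ)) /
    (((δ.1 1 0 : ℤ) : ℚ) * x + ((δ.1 1 1 : ℤ) : ℚ))

/-- The tweaking function `λ_δ(x) = r / (n (r m + s n))` where `δ = [[p,q],[r,s]]`
and `x = m/n` in lowest terms with `n > 0`. -/
def lamTweak (δ : Matrix.SpecialLinearGroup (Fin 2) ℤ) (x : ℚ) : ℚ :=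
  ((δ.1 1 0 : ℤ) : ℚ) /
    ((x.den : ℚ) * (((δ.1 1 0 : ℤ) : ℚ) * (x.num : ℚ) + ((δ.1 1 1 : ℤ) : ℚ) * (x.den : ℚ)))

/-- The cocycle property `λ_{γγ'}(x) = λ_γ(γ' x) + λ_{γ'}(x)` for all rational `x`
away from the poles of `γ'` and `γγ'`. -/
theorem lamTweak_cocycle (γ γ' : Matrix.SpecialLinearGroup (Fin 2) ℤ) (x : ℚ)
    (h1 : ((γ'.1 1 0 : ℤ) : ℚ) * x + ((γ'.1 1 1 : ℤ) : ℚ) ≠ 0)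
    (h2 : (((γ * γ').1 1 0 : ℤ) : ℚ) * x + (((γ * γ').1 1 1 : ℤ) : ℚ) ≠ 0) :
    lamTweak (γ * γ') x = lamTweak γ (moebius γ' x) + lamTweak γ' x := by
  obtain ⟨A, hA⟩ : ∃ A, γ.1 0 0 = A := ⟨_, rfl⟩
  obtain ⟨B, hB⟩ : ∃ B, γ.1 0 1 = B := ⟨_, rfl⟩
  obtain ⟨C, hC⟩ : ∃ C, γ.1 1 0 = C := ⟨_, rfl⟩
  obtain ⟨D, hD⟩ : ∃ D, γ.1 1 1 = D := ⟨_, rfl⟩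
  obtain ⟨A', hA'⟩ : ∃ A', γ'.1 0 0 = A' := ⟨_, rfl⟩
  obtain ⟨B', hB'⟩ : ∃ B', γ'.1 0 1 = B' := ⟨_, rfl⟩
  obtain ⟨C', hC'⟩ : ∃ C', γ'.1 1 0 = C' := ⟨_, rfl⟩
  obtain ⟨D', hD'⟩ : ∃ D', γ'.1 1 1 = D' := ⟨_, rfl⟩
  obtain ⟨m, hm⟩ : ∃ m, x.num = m := ⟨_, rfl⟩
  obtain ⟨n, hn⟩ : ∃ n : ℤ, (x.den : ℤ) = n := ⟨_, rfl⟩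
  have hdet : A' * D' - B' * C' = 1 := by
    have h := γ'.2
    rw [Matrix.det_fin_two] at h
    rw [hA', hB', hC', hD'] at h
    linarith
  have hmul10 : (γ * γ').1 1 0 = C * A' + D * C' := by
    simp [Matrix.SpecialLinearGroup.coe_mul, Matrix.mul_apply, Fin.sum_univ_two,
      hA, hB, hC, hD, hA', hB', hC', hD']
  have hmul11 : (γ * γ').1 1 1 = C * B' + D * D' := by
    simp [Matrix.SpecialLinearGroup.coe_mul, Matrix.mul_apply, Fin.sum_univ_two,
      hA, hB, hC, hD, hA', hB', hC', hD']
  have hn0 : 0 < n := by rw [← hn]; exact_mod_cast x.pos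
  have hnQ : ((n : ℚ)) ≠ 0 := by positivity
  have hdQ : ((x.den : ℚ)) = ((n : ℤ) : ℚ) := by rw [← hn]; norm_cast
  have hx : x = (m : ℚ) / (n : ℚ) := by
    rw [← hm, ← hn]; push_cast; exact (Rat.num_div_den x).symm
  have hxn : x * (n : ℚ) = (m : ℚ) := by rw [hx]; field_simp
  rw [hC', hD'] at h1
  set u := A' * m + B' * n with hu
  set v := C' * m + D' * n with hv
  have hvn : ((C' : ℚ) * x + D') * n = (v : ℚ) := by
    push_cast [hv]; linear_combination (C' : ℚ) * hxn
  have hvQ : ((v : ℚ)) ≠ 0 := by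
    intro h
    rw [h] at hvn
    exact h1 ((mul_eq_zero.mp hvn).resolve_right hnQ)
  have hwn : (((C * A' + D * C' : ℤ) : ℚ) * x + ((C * B' + D * D' : ℤ) : ℚ)) * n
      = ((C * u + D * v : ℤ) : ℚ) := by
    push_cast [hu, hv]; linear_combination ((C : ℚ) * A' + D * C') * hxn
  have hwQ : ((C * u + D * v : ℤ) : ℚ) ≠ 0 := by
    intro h
    rw [h] at hwn
    apply h2
    rw [hmul10, hmul11]
    exact (mul_eq_zero.mp hwn).resolve_right hnQ
  have hv0 : v ≠ 0 := fun h => hvQ (by rw [h]; norm_cast)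
  have hcop : IsCoprime u v := by
    have hmn : IsCoprime m n := by
      rw [Int.isCoprime_iff_gcd_eq_one, ← hm, ← hn]
      exact x.reduced
    obtain ⟨k, l, hkl⟩ := hmn
    exact ⟨k * D' - l * C', l * A' - k * B', by linear_combination (k * m + l * n) * hdet + hkl⟩
  have hcopN : Nat.Coprime u.natAbs v.natAbs := by
    rwa [Int.isCoprime_iff_gcd_eq_one] at hcop
  have hmoeb : moebius γ' x = (u : ℚ) / (v : ℚ) := by
    rw [moebius, hA', hB', hC', hD']
    rw [div_eq_div_iff h1 hvQ]
    push_cast [hu, hv]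
    linear_combination ((A' : ℚ) * D' - B' * C') * hxn
  have hkey : (((moebius γ' x).den : ℚ)) * ((C : ℚ) * (moebius γ' x).num
        + (D : ℚ) * (moebius γ' x).den)
      = (v : ℚ) * ((C : ℚ) * u + (D : ℚ) * v) := by
    rcases lt_or_gt_of_ne hv0 with hneg | hpos
    · have hq2 : moebius γ' x = ((-u : ℤ) : ℚ) / ((-v : ℤ) : ℚ) := by
        rw [hmoeb]; push_cast; rw [div_neg, neg_div, neg_neg]
      have hnum : (moebius γ' x).num = -u := by
        rw [hq2]; exact Rat.num_div_eq_of_coprime (by omega) (by simpa using hcopN)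
      have hden : (((moebius γ' x).den : ℤ)) = -v := by
        rw [hq2]; exact Rat.den_div_eq_of_coprime (by omega) (by simpa using hcopN)
      have hdenQ : (((moebius γ' x).den : ℚ)) = ((-v : ℤ) : ℚ) := by exact_mod_cast hden
      rw [hdenQ, hnum]; push_cast; ring
    · have hnum : (moebius γ' x).num = u := by
        rw [hmoeb]; exact Rat.num_div_eq_of_coprime hpos hcopN
      have hden : (((moebius γ' x).den : ℤ)) = v := by
        rw [hmoeb]; exact Rat.den_div_eq_of_coprime hpos hcopN
      have hdenQ : (((moebius γ' x).den : ℚ)) = ((v : ℤ) : ℚ) := by exact_mod_cast hden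
      rw [hdenQ, hnum]
  rw [lamTweak, lamTweak, lamTweak, hmul10, hmul11, hC, hD, hC', hD', hm, hdQ, hkey]
  have huQ : ((u : ℚ)) = (A' : ℚ) * m + B' * n := by push_cast [hu]; ring
  have hvQ' : ((v : ℚ)) = (C' : ℚ) * m + D' * n := by push_cast [hv]; ring
  push_cast at hwQ
  rw [huQ, hvQ'] at hwQ
  rw [hvQ'] at hvQ
  rw [huQ, hvQ']
  push_cast at hwQ ⊢
  have hdetQ : (A' : ℚ) * D' - B' * C' = 1 := by exact_mod_cast hdet
  have hden2 : ((C:ℚ)*A'+D*C')*m + ((C:ℚ)*B'+D*D')*n ≠ 0 := by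
    intro h; apply hwQ; linear_combination h
  field_simp
  have hY : ((C:ℚ) * A' + D * C') * m + n * (C * B' + D * D') ≠ 0 := by
    intro h; apply hden2; linear_combination h
  have hW : (C:ℚ) * (A' * m + n * B') + D * (C' * m + n * D') ≠ 0 := by
    intro h; apply hden2; linear_combination h
  have hV : (C':ℚ) * m + n * D' ≠ 0 := by
    intro h; apply hvQ; linear_combination h
  rw [div_add' _ _ _ hW, div_div, div_eq_div_iff hY (mul_ne_zero hW hV)]
  linear_combination ((C : ℚ) * n * ((C:ℚ) * (A' * m + n * B') + D * (C' * m + n * D'))) * hdetQ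
end

section
/- For every prime p and every integer r ≥ 1, the p-adic valuation of the denominator of the rational number B_r/r! (where B_r is the r-th Bernoulli number) is at most ⌊r/(p−1)⌋. -/
open Finset

section aux

variable {p : ℕ} [hp : Fact p.Prime]

/-- Lower bound for the valuation of a sum, allowing zero terms since `c ≤ 0`. -/
lemma bern_aux_sum_val {c : ℤ} (hc : c ≤ 0) {s : Finset ℕ} {F : ℕ → ℚ}
    (h : ∀ i ∈ s, c ≤ padicValRat p (F i)) :
    c ≤ padicValRat p (∑ i ∈ s, F i) := by
  classical
  induction s using Finset.induction_on with
  | empty => simpa [padicValRat] using hc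
  | @insert a s hx ih =>
    rw [Finset.sum_insert hx]
    by_cases h0 : F a + ∑ i ∈ s, F i = 0
    · rw [h0]; simpa [padicValRat] using hc
    · refine le_trans ?_ (padicValRat.min_le_padicValRat_add (p := p) h0)
      exact le_min (h a (Finset.mem_insert_self a s))
        (ih fun i hi => h i (Finset.mem_insert_of_mem hi))

/-- `v_p(m!) ≤ (m-1)/(p-1)` for `m ≥ 1`. -/
lemma bern_aux_factorial_val {m : ℕ} (hm : 1 ≤ m) :
    padicValNat p m.factorial ≤ (m - 1) / (p - 1) := by
  have hp1 : 1 ≤ p - 1 := Nat.le_sub_one_of_lt hp.out.one_lt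
  rw [Nat.le_div_iff_mul_le (by omega), mul_comm]
  have hkey := sub_one_mul_padicValNat_factorial (p := p) m
  have hs : 1 ≤ (p.digits m).sum := by
    have hne : p.digits m ≠ [] := Nat.digits_ne_nil_iff_ne_zero.2 (by omega)
    have hlast := Nat.getLast_digit_ne_zero p (show m ≠ 0 by omega)
    have hmem : (p.digits m).getLast hne ∈ p.digits m := List.getLast_mem hne
    have := List.single_le_sum (fun x (_ : x ∈ p.digits m) => Nat.zero_le x) _ hmem
    omega
  omega

lemma bern_aux_div_add_div (a b d : ℕ) : a / d + b / d ≤ (a + b) / d := by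
  rcases Nat.eq_zero_or_pos d with h | h
  · simp [h]
  · rw [Nat.le_div_iff_mul_le h, add_mul]
    exact Nat.add_le_add (Nat.div_mul_le_self a d) (Nat.div_mul_le_self b d)

/-- Main induction: `v_p(B_n / n!) ≥ -⌊n/(p-1)⌋`. -/
lemma bern_aux_main (n : ℕ) :
    -((n / (p - 1) : ℕ) : ℤ) ≤ padicValRat p (bernoulli n / (n.factorial : ℚ)) := by
  induction n using Nat.strong_induction_on with
  | _ n ih =>
  rcases Nat.eq_zero_or_pos n with rfl | hn
  · simp [padicValRat]
  -- recurrence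
  have hsum := sum_bernoulli (n + 1)
  rw [if_neg (by omega)] at hsum
  rw [Finset.sum_range_succ, Nat.choose_succ_self_right] at hsum
  -- identity: B_n / n! = ∑ k < n, -((B_k / k!) * (1 / (n+1-k)!))
  have key : bernoulli n / (n.factorial : ℚ) =
      ∑ k ∈ range n, -((bernoulli k / (k.factorial : ℚ)) *
        (1 / ((n + 1 - k).factorial : ℚ))) := by
    have hterm : ∀ k ∈ range n,
        (((n+1).choose k : ℚ) * bernoulli k) =
        ((n+1).factorial : ℚ) * ((bernoulli k / (k.factorial : ℚ)) *
          (1 / ((n + 1 - k).factorial : ℚ))) := by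
      intro k hk
      have hkn : k ≤ n + 1 := by
        have := Finset.mem_range.1 hk; omega
      have hcf := Nat.choose_mul_factorial_mul_factorial hkn
      have hcfq : (((n+1).choose k : ℚ)) * (k.factorial : ℚ) *
          ((n + 1 - k).factorial : ℚ) = ((n+1).factorial : ℚ) := by
        exact_mod_cast congrArg (Nat.cast : ℕ → ℚ) hcf
      have hk0 : (k.factorial : ℚ) ≠ 0 := Nat.cast_ne_zero.2 k.factorial_ne_zero
      have hnk0 : ((n + 1 - k).factorial : ℚ) ≠ 0 :=
        Nat.cast_ne_zero.2 (n + 1 - k).factorial_ne_zero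
      field_simp
      linear_combination bernoulli k * hcfq
    rw [Finset.sum_congr rfl hterm, ← Finset.mul_sum] at hsum
    have hfac0 : ((n+1).factorial : ℚ) ≠ 0 := Nat.cast_ne_zero.2 (n+1).factorial_ne_zero
    have hn0 : (n.factorial : ℚ) ≠ 0 := Nat.cast_ne_zero.2 n.factorial_ne_zero
    have hfacs : ((n+1).factorial : ℚ) = ((n : ℚ) + 1) * (n.factorial : ℚ) := by
      rw [Nat.factorial_succ]; push_cast; ring
    set S : ℚ := ∑ k ∈ range n, (bernoulli k / (k.factorial : ℚ)) *
        (1 / ((n + 1 - k).factorial : ℚ)) with hS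
    rw [hfacs] at hsum
    push_cast at hsum
    have hn1 : ((n : ℚ) + 1) ≠ 0 := by positivity
    have h0 : (n.factorial : ℚ) * S + bernoulli n = 0 := by
      have hmul : ((n : ℚ) + 1) * ((n.factorial : ℚ) * S + bernoulli n) = 0 := by
        linear_combination hsum
      rcases mul_eq_zero.mp hmul with h | h
      · exact absurd h hn1
      · exact h
    have hgoal : bernoulli n / (n.factorial : ℚ) = -S := by
      rw [div_eq_iff hn0]
      linear_combination h0
    rw [hgoal, ← Finset.sum_neg_distrib]
  rw [key]
  apply bern_aux_sum_val (neg_nonpos.mpr (Int.natCast_nonneg _))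
  intro k hk
  have hkn : k < n := Finset.mem_range.1 hk
  rw [padicValRat.neg]
  by_cases hb : bernoulli k / (k.factorial : ℚ) = 0
  · rw [hb, zero_mul]
    have h0 : padicValRat p 0 = 0 := by simp [padicValRat]
    rw [h0]
    exact neg_nonpos.mpr (Int.natCast_nonneg _)
  have hm1 : 1 ≤ n + 1 - k := by omega
  have hinv0 : (1 : ℚ) / ((n + 1 - k).factorial : ℚ) ≠ 0 := by
    simp [Nat.factorial_ne_zero]
  rw [padicValRat.mul hb hinv0, one_div, padicValRat.inv, padicValRat.of_nat]
  have h1 : -((k / (p - 1) : ℕ) : ℤ) ≤ padicValRat p (bernoulli k / (k.factorial : ℚ)) :=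
    ih k hkn
  have h2 : (padicValNat p (n + 1 - k).factorial : ℤ) ≤ ((n - k) / (p - 1) : ℕ) := by
    have := bern_aux_factorial_val (p := p) hm1
    have he : n + 1 - k - 1 = n - k := by omega
    rw [he] at this
    exact_mod_cast this
  have h3 : k / (p - 1) + (n - k) / (p - 1) ≤ n / (p - 1) := by
    have := bern_aux_div_add_div k (n - k) (p - 1)
    have : k / (p-1) + (n-k)/(p-1) ≤ (k + (n - k)) / (p-1) := this
    have he : k + (n - k) = n := by omega
    rwa [he] at this
  have h3' : -((n / (p - 1) : ℕ) : ℤ) ≤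
      -((k / (p - 1) : ℕ) : ℤ) - ((n - k) / (p - 1) : ℕ) := by
    push_cast
    have : ((k / (p - 1) : ℕ) : ℤ) + ((n - k) / (p - 1) : ℕ) ≤ ((n / (p - 1) : ℕ) : ℤ) := by
      exact_mod_cast h3
    linarith
  refine le_trans h3' ?_
  have := sub_le_sub h1 h2
  linarith [h1, h2]

end aux

/-- For every prime `p` and every `r ≥ 1`, the `p`-adic valuation of the denominator
of `B_r / r!` is at most `⌊r / (p - 1)⌋`. -/
theorem padicValNat_den_bernoulli_div_factorial_le (p : ℕ) (hp : p.Prime) (r : ℕ)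
    (hr : 1 ≤ r) :
    padicValNat p (bernoulli r / (r.factorial : ℚ)).den ≤ r / (p - 1) := by
  haveI : Fact p.Prime := ⟨hp⟩
  set x : ℚ := bernoulli r / (r.factorial : ℚ) with hx
  by_cases hx0 : x = 0
  · simp [hx0]
  by_cases hd : p ∣ x.den
  · have hnum : ¬ (p : ℤ) ∣ x.num := by
      intro hdvd
      have hcop := x.reduced
      have h1 : p ∣ x.num.natAbs := Int.natCast_dvd_natCast.mp (by rwa [Int.dvd_natAbs])
      have h2 : p ∣ 1 := hcop ▸ Nat.dvd_gcd h1 hd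
      exact hp.one_lt.ne' (Nat.eq_one_of_dvd_one h2)
    have hval := bern_aux_main (p := p) r
    rw [← hx, padicValRat_def, padicValInt.eq_zero_of_not_dvd hnum] at hval
    simp only [Nat.cast_zero, zero_sub, neg_le_neg_iff] at hval
    exact_mod_cast hval
  · rw [padicValNat.eq_zero_of_not_dvd hd]
    exact Nat.zero_le _
end

section
/- Let p ≥ 3 be a prime, and for a nonnegative integer m write V_p(m) = v_p(m!) for the p-adic valuation of m!. Then for all integers λ ≥ 0 and r ≥ 2, one has V_p(λ) + λ·⌊(r−1)/(p−2)⌋ ≤ V_p(p·⌊λ(r−1)/(p−2)⌋). -/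
/-- Let `p ≥ 3` be a prime and `V_p(m) = v_p(m!)`.  Then for all `λ ≥ 0` and `r ≥ 2`,
`V_p(λ) + λ ⌊(r-1)/(p-2)⌋ ≤ V_p (p ⌊λ(r-1)/(p-2)⌋)`. -/
theorem factorial_padicVal_ineq (p : ℕ) (hp : p.Prime) (hp3 : 3 ≤ p)
    (l r : ℕ) (hr : 2 ≤ r) :
    padicValNat p (Nat.factorial l) + l * ((r - 1) / (p - 2)) ≤
      padicValNat p (Nat.factorial (p * (l * (r - 1) / (p - 2)))) := by
  haveI : Fact p.Prime := ⟨hp⟩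
  set k := (r - 1) / (p - 2) with hk
  set m := l * (r - 1) / (p - 2) with hm
  rw [padicValNat_factorial_mul m]
  have hlk : l * k ≤ m := Nat.mul_div_le_mul_div_assoc l (r - 1) (p - 2)
  by_cases hlm : l ≤ m
  · have h1 : padicValNat p (Nat.factorial l) ≤ padicValNat p (Nat.factorial m) :=
      (padicValNat_dvd_iff_le (Nat.factorial_ne_zero m)).mp
        (dvd_trans pow_padicValNat_dvd (Nat.factorial_dvd_factorial hlm))
    omega
  · push_neg at hlm
    have hl0 : l ≠ 0 := by
      rintro rfl; simp [hm] at hlm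
    -- r - 1 < p - 2, so k = 0
    have hrp : r - 1 < p - 2 := by
      by_contra h
      push_neg at h
      have : l * (p - 2) ≤ l * (r - 1) := Nat.mul_le_mul_left l h
      have : l ≤ m := by
        rw [hm]
        calc l = l * (p - 2) / (p - 2) := by
                rw [Nat.mul_div_cancel _ (by omega)]
          _ ≤ l * (r - 1) / (p - 2) := Nat.div_le_div_right this
      omega
    have hk0 : k = 0 := by rw [hk]; exact Nat.div_eq_of_lt hrp
    -- digit sum of l is at least 1
    have hs : 1 ≤ (p.digits l).sum := by
      have hne : p.digits l ≠ [] := Nat.digits_ne_nil_iff_ne_zero.mpr hl0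
      have hlast := Nat.getLast_digit_ne_zero p hl0
      have hmem : (p.digits l).getLast hne ∈ p.digits l := List.getLast_mem hne
      have := List.single_le_sum (fun x _ => Nat.zero_le x) _ hmem
      omega
    -- (p-1) * v_p(l!) = l - digit sum ≤ l - 1
    have hleg := sub_one_mul_padicValNat_factorial (p := p) l
    have hdsle := Nat.digit_sum_le p l
    have hv : (p - 1) * padicValNat p (Nat.factorial l) ≤ l - 1 := by omega
    have hv2 : padicValNat p (Nat.factorial l) ≤ (l - 1) / (p - 1) :=
      (Nat.le_div_iff_mul_le (by omega)).mpr (by rw [Nat.mul_comm]; exact hv)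
    have hchain : (l - 1) / (p - 1) ≤ m := by
      calc (l - 1) / (p - 1) ≤ (l - 1) / (p - 2) :=
            Nat.div_le_div_left (by omega) (by omega)
        _ ≤ l * (r - 1) / (p - 2) :=
            Nat.div_le_div_right (by
              have h := Nat.le_mul_of_pos_right l (show 0 < r - 1 by omega); omega)
        _ = m := hm.symm
    rw [hk0, Nat.mul_zero]
    omega
end

section
/- Define for each integer n ≥ 0 the positive integer D_n = 2^{3n + v_2(n!)} · ∏_{p odd prime} p^{Σ_{i≥0} ⌊n/(p^i(p−2))⌋}. Then D is supermultiplicative: for all n₁, n₂ ≥ 0, the product D_{n₁}·D_{n₂} divides D_{n₁+n₂}. -/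
open scoped BigOperators

/-- The exponent of an odd prime `p` in the universal denominator `D n`, namely
`Σ_{i ≥ 0} ⌊n / (p^i (p-2))⌋` (the terms with `i > n` vanish). -/
def Dexp (p n : ℕ) : ℕ := ∑ i ∈ Finset.range (n + 1), n / (p ^ i * (p - 2))

/-- The universal denominator
`D n = 2^{3n + v₂(n!)} ∏_{p odd prime} p^{Σ_{i≥0} ⌊n/(p^i(p-2))⌋}`
(the primes `p > n + 2` contribute trivially). -/
def Duniv (n : ℕ) : ℕ :=
  2 ^ (3 * n + padicValNat 2 (Nat.factorial n)) *
    ∏ p ∈ Finset.filter (fun p => p.Prime ∧ p ≠ 2) (Finset.range (n + 3)), p ^ Dexp p n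

lemma Dexp_term_zero (p n i : ℕ) (h : n < i) : n / (p ^ i * (p - 2)) = 0 := by
  rcases le_or_gt p 2 with hp | hp
  · have : p - 2 = 0 := by omega
    simp [this]
  · apply Nat.div_eq_of_lt
    have h1 : i < 2 ^ i := Nat.lt_two_pow_self (n := i)
    have h2 : 2 ^ i ≤ p ^ i := Nat.pow_le_pow_left (by omega) i
    calc n < p ^ i := by omega
    _ ≤ p ^ i * (p - 2) := Nat.le_mul_of_pos_right _ (by omega)

lemma Dexp_eq_sum (p n m : ℕ) (h : n ≤ m) :
    Dexp p n = ∑ i ∈ Finset.range (m + 1), n / (p ^ i * (p - 2)) := by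
  rw [Dexp]
  apply Finset.sum_subset (Finset.range_subset_range.2 (by omega))
  intro i _ hi
  exact Dexp_term_zero p n i (by simp at hi; omega)

lemma div_add_div_le (a b c : ℕ) : a / c + b / c ≤ (a + b) / c := by
  rcases Nat.eq_zero_or_pos c with rfl | hc
  · simp
  · rw [Nat.le_div_iff_mul_le hc, add_mul]
    exact Nat.add_le_add (Nat.div_mul_le_self a c) (Nat.div_mul_le_self b c)

lemma Dexp_add_le (p n₁ n₂ : ℕ) : Dexp p n₁ + Dexp p n₂ ≤ Dexp p (n₁ + n₂) := by
  rw [Dexp_eq_sum p n₁ (n₁ + n₂) (by omega), Dexp_eq_sum p n₂ (n₁ + n₂) (by omega), Dexp,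
    ← Finset.sum_add_distrib]
  exact Finset.sum_le_sum fun i _ => div_add_div_le _ _ _

lemma Dexp_eq_zero (p n : ℕ) (h : n + 2 < p) : Dexp p n = 0 := by
  rw [Dexp]
  apply Finset.sum_eq_zero
  intro i _
  apply Nat.div_eq_of_lt
  have h1 : 1 ≤ p ^ i := Nat.one_le_pow _ _ (by omega)
  have : n < p - 2 := by omega
  calc n < 1 * (p - 2) := by omega
  _ ≤ p ^ i * (p - 2) := Nat.mul_le_mul_right _ h1

lemma prod_Dexp_eq (n m : ℕ) (h : n ≤ m) :
    ∏ p ∈ Finset.filter (fun p => p.Prime ∧ p ≠ 2) (Finset.range (n + 3)), p ^ Dexp p n =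
    ∏ p ∈ Finset.filter (fun p => p.Prime ∧ p ≠ 2) (Finset.range (m + 3)), p ^ Dexp p n := by
  apply Finset.prod_subset
  · exact Finset.filter_subset_filter _ (Finset.range_subset_range.2 (by omega))
  · intro p hp hp'
    simp only [Finset.mem_filter, Finset.mem_range] at hp hp'
    have : ¬ p < n + 3 := fun h => hp' ⟨h, hp.2⟩
    rw [Dexp_eq_zero p n (by omega), pow_zero]

/-- Supermultiplicativity: `D_{n₁} D_{n₂}` divides `D_{n₁ + n₂}`. -/
theorem Duniv_mul_dvd (n₁ n₂ : ℕ) : Duniv n₁ * Duniv n₂ ∣ Duniv (n₁ + n₂) := by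
  unfold Duniv
  rw [prod_Dexp_eq n₁ (n₁ + n₂) (by omega), prod_Dexp_eq n₂ (n₁ + n₂) (by omega)]
  set S := Finset.filter (fun p => p.Prime ∧ p ≠ 2) (Finset.range (n₁ + n₂ + 3)) with hS
  have h2 : (3 * n₁ + padicValNat 2 (Nat.factorial n₁)) +
      (3 * n₂ + padicValNat 2 (Nat.factorial n₂)) ≤
      3 * (n₁ + n₂) + padicValNat 2 (Nat.factorial (n₁ + n₂)) := by
    have hdvd := Nat.factorial_mul_factorial_dvd_factorial_add n₁ n₂
    have hle : padicValNat 2 (Nat.factorial n₁) + padicValNat 2 (Nat.factorial n₂) ≤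
        padicValNat 2 (Nat.factorial (n₁ + n₂)) := by
      haveI : Fact (Nat.Prime 2) := ⟨Nat.prime_two⟩
      rw [← padicValNat.mul (Nat.factorial_ne_zero n₁) (Nat.factorial_ne_zero n₂)]
      rw [← padicValNat_dvd_iff_le (Nat.factorial_ne_zero (n₁ + n₂))]
      exact dvd_trans pow_padicValNat_dvd hdvd
    omega
  have hP : (∏ p ∈ S, p ^ Dexp p n₁) * (∏ p ∈ S, p ^ Dexp p n₂) ∣
      ∏ p ∈ S, p ^ Dexp p (n₁ + n₂) := by
    rw [← Finset.prod_mul_distrib]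
    apply Finset.prod_dvd_prod_of_dvd
    intro p _
    rw [← pow_add]
    exact pow_dvd_pow p (Dexp_add_le p n₁ n₂)
  calc 2 ^ (3 * n₁ + padicValNat 2 (Nat.factorial n₁)) * (∏ p ∈ S, p ^ Dexp p n₁) *
      (2 ^ (3 * n₂ + padicValNat 2 (Nat.factorial n₂)) * (∏ p ∈ S, p ^ Dexp p n₂)) =
      2 ^ ((3 * n₁ + padicValNat 2 (Nat.factorial n₁)) +
        (3 * n₂ + padicValNat 2 (Nat.factorial n₂))) *
      ((∏ p ∈ S, p ^ Dexp p n₁) * (∏ p ∈ S, p ^ Dexp p n₂)) := by ring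
  _ ∣ _ := mul_dvd_mul (pow_dvd_pow 2 h2) hP
end

section
/- For all integers r ≥ 2 and λ ≥ 0, the rational number (1/λ!)·(B_r/r!)^λ lies in (1/D_{λ(r−1)})·ℤ, where B_r is the r-th Bernoulli number and D_n = 2^{3n+v_2(n!)}·∏_{p odd} p^{Σ_{i≥0}⌊n/(p^i(p−2))⌋} (one may exclude the prime 2, i.e., it suffices to prove that the odd part of the denominator of (1/λ!)(B_r/r!)^λ divides the odd part of D_{λ(r−1)}). -/
open scoped BigOperators

namespace BPaux

/-- `Mv p k q` means `v_p(q) ≥ k`. -/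
def Mv (p : ℕ) (k : ℤ) (q : ℚ) : Prop :=
  ∃ a b : ℤ, ¬ (p : ℤ) ∣ b ∧ q * b = (p : ℚ) ^ k * a

variable {p : ℕ}

lemma Mv.mul (hp : p.Prime) {k j : ℤ} {q q' : ℚ} (h : Mv p k q) (h' : Mv p j q') :
    Mv p (k + j) (q * q') := by
  obtain ⟨a, b, hb, he⟩ := h
  obtain ⟨a', b', hb', he'⟩ := h'
  have hpz : Prime (p : ℤ) := Nat.prime_iff_prime_int.mp hp
  refine ⟨a * a', b * b', fun hd => ?_, ?_⟩
  · rcases hpz.dvd_mul.mp hd with h | h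
    exacts [hb h, hb' h]
  · have hpq : (p : ℚ) ≠ 0 := by exact_mod_cast hp.ne_zero
    push_cast
    rw [zpow_add₀ hpq]
    calc q * q' * (b * b') = (q * b) * (q' * b') := by ring
    _ = ((p:ℚ)^k * a) * ((p:ℚ)^j * a') := by rw [he, he']
    _ = (p:ℚ)^k * (p:ℚ)^j * (a * a') := by ring

lemma Mv.add (hp : p.Prime) {k : ℤ} {q q' : ℚ} (h : Mv p k q) (h' : Mv p k q') :
    Mv p k (q + q') := by
  obtain ⟨a, b, hb, he⟩ := h
  obtain ⟨a', b', hb', he'⟩ := h'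
  have hpz : Prime (p : ℤ) := Nat.prime_iff_prime_int.mp hp
  refine ⟨a * b' + a' * b, b * b', fun hd => ?_, ?_⟩
  · rcases hpz.dvd_mul.mp hd with h | h
    exacts [hb h, hb' h]
  · push_cast
    calc (q + q') * (b * b') = (q * b) * b' + (q' * b') * b := by ring
    _ = ((p:ℚ)^k * a) * b' + ((p:ℚ)^k * a') * b := by rw [he, he']
    _ = (p:ℚ)^k * (a * b' + a' * b) := by ring

lemma Mv.neg {k : ℤ} {q : ℚ} (h : Mv p k q) : Mv p k (-q) := by
  obtain ⟨a, b, hb, he⟩ := h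
  exact ⟨-a, b, hb, by push_cast; rw [neg_mul, he]; ring⟩

lemma Mv.sub (hp : p.Prime) {k : ℤ} {q q' : ℚ} (h : Mv p k q) (h' : Mv p k q') :
    Mv p k (q - q') := by
  rw [sub_eq_add_neg]; exact h.add hp h'.neg

lemma not_p_dvd_one (hp : p.Prime) : ¬ (p : ℤ) ∣ 1 := by
  intro h
  rw [show (1 : ℤ) = ((1 : ℕ) : ℤ) by norm_num, Int.natCast_dvd_natCast] at h
  exact hp.ne_one (Nat.eq_one_of_dvd_one h)

lemma Mv.zero (hp : p.Prime) (k : ℤ) : Mv p k 0 :=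
  ⟨0, 1, not_p_dvd_one hp, by simp⟩

lemma Mv.natCast (hp : p.Prime) {e : ℕ} {c : ℕ} (h : p ^ e ∣ c) : Mv p (e : ℤ) (c : ℚ) := by
  obtain ⟨d, rfl⟩ := h
  exact ⟨d, 1, not_p_dvd_one hp, by push_cast; rw [zpow_natCast]; ring⟩

lemma Mv.nat (hp : p.Prime) (c : ℕ) : Mv p 0 (c : ℚ) := by
  simpa using Mv.natCast hp (e := 0) (c := c) (by simp)

lemma Mv.sum (hp : p.Prime) {k : ℤ} {s : Finset ℕ} {f : ℕ → ℚ}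
    (h : ∀ i ∈ s, Mv p k (f i)) : Mv p k (∑ i ∈ s, f i) := by
  classical
  induction s using Finset.induction_on with
  | empty => simpa using Mv.zero hp k
  | @insert a s hx ih =>
    rw [Finset.sum_insert hx]
    exact (h _ (Finset.mem_insert_self _ _)).add hp
      (ih fun i hi => h i (Finset.mem_insert_of_mem hi))

lemma Mv.mono (hp : p.Prime) {k j : ℤ} {q : ℚ} (hjk : j ≤ k) (h : Mv p k q) : Mv p j q := by
  obtain ⟨a, b, hb, he⟩ := h
  refine ⟨(p : ℤ) ^ (k - j).toNat * a, b, hb, ?_⟩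
  have hpq : (p : ℚ) ≠ 0 := by exact_mod_cast hp.ne_zero
  push_cast
  rw [he, ← zpow_natCast (p:ℚ) (k - j).toNat, Int.toNat_of_nonneg (by omega), ← mul_assoc,
    ← zpow_add₀ hpq]
  ring_nf

lemma Mv.pow (hp : p.Prime) {k : ℤ} {q : ℚ} (h : Mv p k q) (l : ℕ) :
    Mv p (l * k) (q ^ l) := by
  induction l with
  | zero => exact ⟨1, 1, not_p_dvd_one hp, by simp⟩
  | succ n ih =>
    have h2 := ih.mul hp h
    have he : ((n + 1 : ℕ) : ℤ) * k = (n : ℤ) * k + k := by push_cast; ring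
    rw [he, pow_succ]
    exact h2

lemma Mv.p_mul (hp : p.Prime) {k : ℤ} {q : ℚ} (h : Mv p k q) : Mv p (k + 1) ((p : ℚ) * q) := by
  obtain ⟨a, b, hb, he⟩ := h
  have hpq : (p : ℚ) ≠ 0 := by exact_mod_cast hp.ne_zero
  refine ⟨a, b, hb, ?_⟩
  rw [zpow_add₀ hpq, zpow_one, mul_assoc, he]; ring

lemma Mv.one_div_nat (hp : p.Prime) {c : ℕ} (hc : c ≠ 0) :
    Mv p (-(padicValNat p c : ℤ)) (1 / (c : ℚ)) := by
  haveI : Fact p.Prime := ⟨hp⟩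
  set v := padicValNat p c with hv
  set u := c / p ^ v with hu
  have hdvd : p ^ v ∣ c := pow_padicValNat_dvd
  have hcu : p ^ v * u = c := Nat.mul_div_cancel' hdvd
  have hnd : ¬ p ∣ u := by
    have h0 := Nat.not_dvd_ordCompl hp hc
    rwa [Nat.factorization_def c hp, ← hv, ← hu] at h0
  have hu0 : u ≠ 0 := by
    intro h0; rw [h0, mul_zero] at hcu; exact hc hcu.symm
  refine ⟨1, (u : ℤ), by exact_mod_cast hnd, ?_⟩
  have hcq : (c : ℚ) ≠ 0 := by exact_mod_cast hc
  have hpq : (p : ℚ) ≠ 0 := by exact_mod_cast hp.ne_zero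
  have huq : (u : ℚ) ≠ 0 := by exact_mod_cast hu0
  have hQ : (p : ℚ) ^ v * (u : ℚ) = (c : ℚ) := by exact_mod_cast hcu
  push_cast
  rw [zpow_neg, zpow_natCast, ← hQ]
  field_simp



variable {p : ℕ}

/-- Legendre recursion. -/
lemma fac_rec (hp : p.Prime) (x : ℕ) :
    padicValNat p (Nat.factorial x) = x / p + padicValNat p (Nat.factorial (x / p)) := by
  haveI : Fact p.Prime := ⟨hp⟩
  rw [← padicValNat_mul_div_factorial (p := p) (n := x), padicValNat_factorial_mul]
  ring

lemma fac_zero_of_lt (hp : p.Prime) {x : ℕ} (h : x < p) :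
    padicValNat p (Nat.factorial x) = 0 := by
  rw [fac_rec hp, Nat.div_eq_of_lt h]
  simp [Nat.factorial]

lemma fac_mono (hp : p.Prime) {x y : ℕ} (h : x ≤ y) :
    padicValNat p (Nat.factorial x) ≤ padicValNat p (Nat.factorial y) := by
  haveI : Fact p.Prime := ⟨hp⟩
  rw [← Nat.factorization_def _ hp, ← Nat.factorization_def _ hp]
  exact (Nat.factorization_le_iff_dvd (Nat.factorial_ne_zero x) (Nat.factorial_ne_zero y)).mpr
    (Nat.factorial_dvd_factorial h) p

/-- `(p-1) v_p(x!) + 1 ≤ x` for `x ≥ 1`. -/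
lemma N3 (hp : p.Prime) : ∀ x : ℕ, 1 ≤ x → (p - 1) * padicValNat p (Nat.factorial x) + 1 ≤ x := by
  intro x
  induction x using Nat.strong_induction_on with
  | _ x ih =>
    intro hx
    rcases Nat.eq_zero_or_pos (x / p) with h0 | h0
    · rw [fac_rec hp, h0]
      simp [Nat.factorial]
      omega
    · have hxp : x / p < x := Nat.div_lt_self (by omega) hp.one_lt
      have ihh := ih (x / p) hxp h0
      have hmul : p * (x / p) ≤ x := Nat.mul_div_le x p
      rw [fac_rec hp, Nat.mul_add]
      have h5 : (p - 1) * (x / p) + (x / p) = p * (x / p) := by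
        have h6 : p - 1 + 1 = p := by have := hp.two_le; omega
        calc (p - 1) * (x / p) + (x / p) = ((p - 1) + 1) * (x / p) := by ring
        _ = p * (x / p) := by rw [h6]
      omega

/-- if `v_p(r!) ≥ 1` then `r ≥ p`. -/
lemma ge_p_of_fac_pos (hp : p.Prime) {r : ℕ} (h : 1 ≤ padicValNat p (Nat.factorial r)) :
    p ≤ r := by
  by_contra hlt
  rw [fac_zero_of_lt hp (by omega)] at h
  omega

/-- Digit lemma: for odd prime `p` with `(p-1) ∣ r`, `r ≥ 1`:
`(p-2) * v_p(r!) + (p-1) ≤ r`. -/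
lemma D1 (hp : p.Prime) (hodd : 2 < p) {r : ℕ} (hr : 1 ≤ r) (hdvd : (p - 1) ∣ r) :
    (p - 2) * padicValNat p (Nat.factorial r) + (p - 1) ≤ r := by
  set V := padicValNat p (Nat.factorial r) with hV
  rcases lt_or_ge r (p * p) with hsmall | hbig
  · -- V = r / p
    have hlt : r / p < p := (Nat.div_lt_iff_lt_mul (by omega)).mpr hsmall
    have hVa : V = r / p := by
      rw [hV, fac_rec hp, fac_zero_of_lt hp hlt, Nat.add_zero]
    set a := r / p with ha
    set b := r % p with hb
    have hab : a * p + b = r := by rw [mul_comm]; exact Nat.div_add_mod r p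
    have hbp : b < p := Nat.mod_lt _ (by omega)
    rcases Nat.eq_zero_or_pos a with h0 | h0
    · have hb0 : b = r := by rw [h0] at hab; simpa using hab
      have hrp : r < p := by omega
      have hple : p - 1 ≤ r := Nat.le_of_dvd (by omega) hdvd
      rw [hVa, h0]
      omega
    · have hdvd2 : (p - 1) ∣ (a + b) := by
        have he : r = a * (p - 1) + (a + b) := by
          have : a * p = a * (p - 1) + a := by
            have h6 : p - 1 + 1 = p := by omega
            calc a * p = a * ((p - 1) + 1) := by rw [h6]
            _ = a * (p - 1) + a := by ring
          omega
        have hd : (p - 1) ∣ a * (p - 1) := Dvd.intro_left a rfl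
        have : (p - 1) ∣ a * (p - 1) + (a + b) := he ▸ hdvd
        exact (Nat.dvd_add_right hd).mp this
      have hab1 : p - 1 ≤ a + b := Nat.le_of_dvd (by omega) hdvd2
      rw [hVa]
      -- (p-2)*a + (p-1) ≤ a*p + b
      have e1 : a * p = a * (p - 2) + 2 * a := by
        have h6 : p - 2 + 2 = p := by omega
        calc a * p = a * ((p - 2) + 2) := by rw [h6]
        _ = a * (p - 2) + 2 * a := by ring
      have e2 : (p - 2) * a = a * (p - 2) := by ring
      omega
  · -- r ≥ p^2 : V ≥ p and use N3
    have hVp : p ≤ V := by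
      rw [hV, fac_rec hp]
      have : p ≤ r / p := (Nat.le_div_iff_mul_le (by omega)).mpr (by nlinarith)
      omega
    have hN3 := N3 hp r hr
    rw [← hV] at hN3
    have e1 : (p - 1) * V = (p - 2) * V + V := by
      have h6 : p - 2 + 1 = p - 1 := by omega
      calc (p - 1) * V = ((p - 2) + 1) * V := by rw [h6]
      _ = (p - 2) * V + V := by ring
    omega

/-- C1: for odd prime `p`, `r ≥ 2` : `(l/p + l * v_p(r!)) * (p-2) ≤ l * (r-1)`. -/
lemma C1 (hp : p.Prime) (hodd : 2 < p) {r : ℕ} (hr : 2 ≤ r) (l : ℕ) :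
    (l / p + l * padicValNat p (Nat.factorial r)) * (p - 2) ≤ l * (r - 1) := by
  set V := padicValNat p (Nat.factorial r) with hV
  rcases Nat.eq_zero_or_pos V with h0 | h0
  · rw [h0]
    simp only [Nat.mul_zero, Nat.add_zero]
    have h1 : l / p * p ≤ l := Nat.div_mul_le_self l p
    have h2 : l / p * (p - 2) ≤ l / p * p := Nat.mul_le_mul_left _ (by omega)
    have h3 : l ≤ l * (r - 1) := Nat.le_mul_of_pos_right l (by omega)
    omega
  · have hrp : p ≤ r := ge_p_of_fac_pos hp h0
    have hN3 := N3 hp r (by omega)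
    rw [← hV] at hN3
    have hkey : p * (p - 2) * V + (p - 2) ≤ p * (r - 1) := by
      have h1 : (p - 1) * V + 1 ≤ r := hN3
      have h2 : p * ((p - 1) * V) ≤ p * (r - 1) := by
        apply Nat.mul_le_mul_left
        omega
      have h3 : p * ((p - 1) * V) = p * (p - 2) * V + p * V := by
        have h6 : p - 2 + 1 = p - 1 := by omega
        calc p * ((p - 1) * V) = p * (((p - 2) + 1) * V) := by rw [h6]
        _ = p * (p - 2) * V + p * V := by ring
      have h4 : p ≤ p * V := Nat.le_mul_of_pos_right p h0
      omega
    have hcancel : ∀ x y : ℕ, p * x ≤ p * y → x ≤ y := fun x y h =>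
      Nat.le_of_mul_le_mul_left h (by omega)
    apply hcancel
    have hlp : p * (l / p) ≤ l := Nat.mul_div_le l p
    calc p * ((l / p + l * V) * (p - 2))
        = (p * (l / p)) * (p - 2) + l * (p * (p - 2) * V) := by ring
    _ ≤ l * (p - 2) + l * (p * (p - 2) * V) := by
        have := Nat.mul_le_mul_right (p - 2) hlp
        omega
    _ = l * (p * (p - 2) * V + (p - 2)) := by ring
    _ ≤ l * (p * (r - 1)) := Nat.mul_le_mul_left _ hkey
    _ = p * (l * (r - 1)) := by ring

/-- `Dexp p n = M + v_p(M!)` with `M = n / (p-2)`, for odd prime `p`. -/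
lemma dexp_eq (hp : p.Prime) (hodd : 2 < p) (n : ℕ) :
    Dexp p n = n / (p - 2) + padicValNat p (Nat.factorial (n / (p - 2))) := by
  haveI : Fact p.Prime := ⟨hp⟩
  set M := n / (p - 2) with hM
  have hterm : ∀ i : ℕ, n / (p ^ i * (p - 2)) = M / p ^ i := by
    intro i
    rw [hM, Nat.div_div_eq_div_mul, mul_comm]
  rcases Nat.eq_zero_or_pos n with rfl | hn
  · simp [Dexp, hM, Nat.factorial]
  have hlog : Nat.log p M < n + 1 := by
    rcases Nat.eq_zero_or_pos M with h0 | h0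
    · rw [h0]; simp
    · have h1 : Nat.log p M < M := Nat.log_lt_self p (by omega)
      have h2 : M ≤ n := Nat.div_le_self n _
      omega
  rw [Dexp, Finset.sum_congr rfl (fun i _ => hterm i), Finset.range_eq_Ico,
    Finset.sum_eq_sum_Ico_succ_bot (by omega : 0 < n + 1) (fun i => M / p ^ i),
    padicValNat_factorial hlog]
  simp

/-! ### Case inequalities -/

lemma caseA (hp : p.Prime) (hodd : 2 < p) {r : ℕ} (hr : 2 ≤ r) (l : ℕ) :
    padicValNat p (Nat.factorial l) + l * padicValNat p (Nat.factorial r)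
      ≤ Dexp p (l * (r - 1)) := by
  set n := l * (r - 1) with hn
  set M := n / (p - 2) with hM
  set a := l / p + l * padicValNat p (Nat.factorial r) with ha
  have haM : a ≤ M := by
    rw [hM]
    exact (Nat.le_div_iff_mul_le (by omega)).mpr (C1 hp hodd hr l)
  have hrec := fac_rec hp l
  have hmono : padicValNat p (Nat.factorial (l / p)) ≤ padicValNat p (Nat.factorial M) :=
    fac_mono hp (by omega)
  have hD := dexp_eq hp hodd n
  rw [← hM] at hD
  omega

lemma caseB (hp : p.Prime) (hodd : 2 < p) {r : ℕ} (hr : 2 ≤ r) (hdvd : (p - 1) ∣ r) (l : ℕ) :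
    padicValNat p (Nat.factorial l) + l * padicValNat p (Nat.factorial r) + l
      ≤ Dexp p (l * (r - 1)) := by
  set V := padicValNat p (Nat.factorial r) with hV
  set n := l * (r - 1) with hn
  set M := n / (p - 2) with hM
  have hp1r : p - 1 ≤ r := Nat.le_of_dvd (by omega) hdvd
  have hD1 : (p - 2) * V + (p - 1) ≤ r := D1 hp hodd (by omega) hdvd
  set t := l * (r - (p - 1)) / (p - 2) with ht
  have hsplit : n = l * (r - (p - 1)) + l * (p - 2) := by
    rw [hn, ← Nat.mul_add]
    congr 1
    omega
  have hMt : M = t + l := by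
    rw [hM, hsplit, Nat.add_mul_div_right _ _ (by omega : 0 < p - 2), ht]
  have hlt : l * V ≤ t := by
    rw [ht]
    apply (Nat.le_div_iff_mul_le (by omega : 0 < p - 2)).mpr
    calc l * V * (p - 2) = l * ((p - 2) * V) := by ring
    _ ≤ l * (r - (p - 1)) := Nat.mul_le_mul_left _ (by omega)
  have hmono : padicValNat p (Nat.factorial l) ≤ padicValNat p (Nat.factorial M) :=
    fac_mono hp (by omega)
  have hD := dexp_eq hp hodd n
  rw [← hM] at hD
  omega

lemma case2 {r : ℕ} (hr : 2 ≤ r) (l : ℕ) :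
    padicValNat 2 (Nat.factorial l) + l * padicValNat 2 (Nat.factorial r) + l
      ≤ 3 * (l * (r - 1)) + padicValNat 2 (Nat.factorial (l * (r - 1))) := by
  have hp : Nat.Prime 2 := Nat.prime_two
  rcases Nat.eq_zero_or_pos l with rfl | hl
  · simp [Nat.factorial]
  have h1 : padicValNat 2 (Nat.factorial l) + 1 ≤ l := by
    have := N3 hp l hl
    simpa using this
  have h2 : padicValNat 2 (Nat.factorial r) + 1 ≤ r := by
    have := N3 hp r (by omega)
    simpa using this
  have h3 : l * padicValNat 2 (Nat.factorial r) ≤ l * (r - 1) :=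
    Nat.mul_le_mul_left _ (by omega)
  have h4 : l ≤ l * (r - 1) := Nat.le_mul_of_pos_right l (by omega)
  omega

/-! ### Bernoulli: von Staudt–Clausen style bounds -/

lemma choose_identity {r i : ℕ} (hi : i < r) :
    (r + 1) * r.choose i = (r + 1).choose i * (r + 1 - i) := by
  have h1 : i ≤ r := by omega
  calc (r + 1) * r.choose i = (r + 1) * r.choose (r - i) := by rw [Nat.choose_symm h1]
  _ = (r + 1).choose (r - i + 1) * (r - i + 1) := Nat.add_one_mul_choose_eq r (r - i)
  _ = (r + 1).choose (r + 1 - i) * (r + 1 - i) := by rw [show r - i + 1 = r + 1 - i by omega]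
  _ = (r + 1).choose i * (r + 1 - i) := by
      rw [show r + 1 - i = r + 1 - i from rfl, Nat.choose_symm (by omega : i ≤ r + 1)]

lemma key_decomp (hp : p.Prime) (r : ℕ) :
    (p : ℚ) * bernoulli r
      = (∑ k ∈ Finset.range p, (k : ℚ) ^ r)
        - ∑ i ∈ Finset.range r,
            ((p : ℚ) * bernoulli i) * ((r.choose i : ℕ) : ℚ)
              * ((p : ℚ) ^ (r - i) / ((r + 1 - i : ℕ) : ℚ)) := by
  have h := sum_range_pow p r
  rw [Finset.sum_range_succ] at h
  have hlast : bernoulli r * ((r + 1).choose r) * (p : ℚ) ^ (r + 1 - r) / (r + 1)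
      = (p : ℚ) * bernoulli r := by
    rw [Nat.choose_succ_self_right, show r + 1 - r = 1 by omega, pow_one]
    have : ((r : ℚ) + 1) ≠ 0 := by positivity
    push_cast
    field_simp
  have hterms : ∀ i ∈ Finset.range r,
      bernoulli i * ((r + 1).choose i) * (p : ℚ) ^ (r + 1 - i) / (r + 1)
        = ((p : ℚ) * bernoulli i) * ((r.choose i : ℕ) : ℚ)
            * ((p : ℚ) ^ (r - i) / ((r + 1 - i : ℕ) : ℚ)) := by
    intro i hi
    have hi' : i < r := Finset.mem_range.mp hi
    have hnat := choose_identity hi'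
    have hm0 : ((r + 1 - i : ℕ) : ℚ) ≠ 0 := by
      have : 0 < r + 1 - i := by omega
      exact_mod_cast this.ne'
    have hr10 : ((r : ℚ) + 1) ≠ 0 := by positivity
    have hpow : (p : ℚ) ^ (r + 1 - i) = (p : ℚ) * (p : ℚ) ^ (r - i) := by
      rw [show r + 1 - i = (r - i) + 1 by omega, pow_succ]
      ring
    have hcast : ((r : ℚ) + 1) * (r.choose i : ℚ)
        = ((r + 1).choose i : ℚ) * ((r + 1 - i : ℕ) : ℚ) := by
      exact_mod_cast hnat
    have hR : ((p : ℚ) * bernoulli i) * ((r.choose i : ℕ) : ℚ)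
          * ((p : ℚ) ^ (r - i) / ((r + 1 - i : ℕ) : ℚ))
        = bernoulli i * ((r.choose i : ℕ) : ℚ) * (p : ℚ) ^ (r + 1 - i) / ((r + 1 - i : ℕ) : ℚ) := by
      rw [hpow]; ring
    rw [hR, div_eq_div_iff hr10 hm0]
    linear_combination (-(bernoulli i * (p : ℚ) ^ (r + 1 - i))) * hcast
  rw [Finset.sum_congr rfl hterms, hlast] at h
  rw [h]
  ring

lemma val_le_sub_one (hp : p.Prime) {m : ℕ} (hm : 1 ≤ m) : padicValNat p m ≤ m - 1 := by
  by_contra hcon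
  have hv : m ≤ padicValNat p m - 1 + 1 := by omega
  have hd : p ^ padicValNat p m ∣ m := pow_padicValNat_dvd
  have hle : p ^ padicValNat p m ≤ m := Nat.le_of_dvd (by omega) hd
  have h2 : m < 2 ^ m := Nat.lt_two_pow_self
  have h3 : 2 ^ m ≤ 2 ^ padicValNat p m := Nat.pow_le_pow_right (by omega) (by omega)
  have h4 : 2 ^ padicValNat p m ≤ p ^ padicValNat p m :=
    Nat.pow_le_pow_left hp.two_le _
  omega

lemma lt_three_pow_aux : ∀ n : ℕ, n + 2 < 3 ^ (n + 1) := by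
  intro n
  induction n with
  | zero => norm_num
  | succ k ih =>
    have h3 : 3 ^ (k + 1 + 1) = 3 ^ (k + 1) * 3 := pow_succ 3 (k + 1)
    omega

lemma lt_three_pow (m : ℕ) (h : 2 ≤ m) : m < 3 ^ (m - 1) := by
  obtain ⟨n, rfl⟩ : ∃ n, m = n + 2 := ⟨m - 2, by omega⟩
  simpa [show n + 2 - 1 = n + 1 by omega] using lt_three_pow_aux n

lemma val_le_sub_two (hp : p.Prime) (hodd : 2 < p) {m : ℕ} (hm : 2 ≤ m) :
    padicValNat p m ≤ m - 2 := by
  by_contra hcon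
  have hd : p ^ padicValNat p m ∣ m := pow_padicValNat_dvd
  have hle : p ^ padicValNat p m ≤ m := Nat.le_of_dvd (by omega) hd
  have h2 : m < 3 ^ (m - 1) := lt_three_pow m hm
  have h3 : 3 ^ (m - 1) ≤ 3 ^ padicValNat p m := Nat.pow_le_pow_right (by omega) (by omega)
  have h4 : 3 ^ padicValNat p m ≤ p ^ padicValNat p m := Nat.pow_le_pow_left hodd _
  omega

/-- `v_p(p^(m-1)/m) ≥ (m-1) - v_p(m) ≥ 0`. -/
lemma Mv.p_pow_div (hp : p.Prime) {m : ℕ} (hm : 1 ≤ m) :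
    Mv p ((m - 1 : ℕ) - (padicValNat p m : ℤ)) ((p : ℚ) ^ (m - 1) / (m : ℚ)) := by
  have h1 : Mv p ((m - 1 : ℕ) : ℤ) ((p : ℚ) ^ (m - 1)) := by
    have := Mv.natCast hp (e := m - 1) (c := p ^ (m - 1)) dvd_rfl
    rw [Nat.cast_pow] at this
    exact this
  have h2 := Mv.one_div_nat hp (c := m) (by omega)
  have h3 := h1.mul hp h2
  rw [div_eq_mul_one_div, sub_eq_add_neg]
  exact h3

lemma bernoulli_weak (hp : p.Prime) : ∀ r : ℕ, Mv p (-1) (bernoulli r) := by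
  intro r
  induction r using Nat.strong_induction_on with
  | _ r ih =>
    suffices h : Mv p 0 ((p : ℚ) * bernoulli r) by
      obtain ⟨a, b, hb, he⟩ := h
      refine ⟨a, b, hb, ?_⟩
      have hpq : (p : ℚ) ≠ 0 := by exact_mod_cast hp.ne_zero
      have : (p : ℚ) * (bernoulli r * b) = (p:ℚ) ^ (0:ℤ) * a := by rw [← he]; ring
      rw [zpow_zero, one_mul] at this
      rw [zpow_neg, zpow_one]
      field_simp
      linear_combination this
    rw [key_decomp hp r]
    apply Mv.sub hp
    · have : (∑ k ∈ Finset.range p, (k : ℚ) ^ r)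
          = ((∑ k ∈ Finset.range p, k ^ r : ℕ) : ℚ) := by push_cast; ring
      rw [this]
      exact Mv.nat hp _
    · apply Mv.sum hp
      intro i hi
      have hi' : i < r := Finset.mem_range.mp hi
      have hB : Mv p 0 ((p : ℚ) * bernoulli i) := by
        have := (ih i hi').p_mul hp
        simpa using this
      have hC : Mv p 0 ((r.choose i : ℕ) : ℚ) := Mv.nat hp _
      have hm1 : 1 ≤ r + 1 - i := by omega
      have hF : Mv p 0 ((p : ℚ) ^ (r - i) / ((r + 1 - i : ℕ) : ℚ)) := by
        have h1 := Mv.p_pow_div hp (m := r + 1 - i) hm1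
        have h2 : (0 : ℤ) ≤ ((r + 1 - i - 1 : ℕ) : ℤ) - (padicValNat p (r + 1 - i) : ℤ) := by
          have := val_le_sub_one hp hm1
          omega
        have h3 := h1.mono hp h2
        rwa [show r + 1 - i - 1 = r - i by omega] at h3
      have := (hB.mul hp hC).mul hp hF
      simpa using this

lemma zmod_sum_dvd (hp : p.Prime) {r : ℕ} (hnd : ¬ (p - 1) ∣ r) :
    (p : ℤ) ∣ ∑ k ∈ Finset.range p, (k : ℤ) ^ r := by
  haveI : Fact p.Prime := ⟨hp⟩
  have hr0 : r ≠ 0 := by rintro rfl; exact hnd (dvd_zero _)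
  rw [← ZMod.intCast_zmod_eq_zero_iff_dvd]
  push_cast
  have hbij : (∑ k ∈ Finset.range p, ((k : ZMod p)) ^ r) = ∑ x : ZMod p, x ^ r := by
    apply Finset.sum_nbij' (i := fun (k : ℕ) => (k : ZMod p)) (j := fun (x : ZMod p) => x.val)
    · intro a ha
      exact Finset.mem_univ _
    · intro x hx
      exact Finset.mem_range.mpr (ZMod.val_lt x)
    · intro a ha
      exact ZMod.val_cast_of_lt (Finset.mem_range.mp ha)
    · intro x hx
      exact ZMod.natCast_rightInverse x
    · intro a ha
      rfl
  rw [hbij]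
  set r' := r % (p - 1) with hr'
  have hr'0 : r' ≠ 0 := fun h0 => hnd (Nat.dvd_of_mod_eq_zero h0)
  have hr'lt : r' < p - 1 := Nat.mod_lt _ (by have := hp.two_le; omega)
  have hcongr : ∀ x : ZMod p, x ^ r = x ^ r' := by
    intro x
    by_cases hx : x = 0
    · rw [hx, zero_pow hr0, zero_pow hr'0]
    · conv_lhs => rw [show r = (p - 1) * (r / (p - 1)) + r' from by
        rw [hr']; exact (Nat.div_add_mod r (p - 1)).symm]
      rw [pow_add, pow_mul, ZMod.pow_card_sub_one_eq_one hx, one_pow, one_mul]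
  rw [Finset.sum_congr rfl (fun x _ => hcongr x)]
  have hcard : r' < Fintype.card (ZMod p) - 1 := by rw [ZMod.card]; exact hr'lt
  exact FiniteField.sum_pow_lt_card_sub_one (ZMod p) r' hcard

lemma bernoulli_strong (hp : p.Prime) (hodd : 2 < p) {r : ℕ} (hnd : ¬ (p - 1) ∣ r) :
    Mv p 0 (bernoulli r) := by
  suffices h : Mv p 1 ((p : ℚ) * bernoulli r) by
    obtain ⟨a, b, hb, he⟩ := h
    refine ⟨a, b, hb, ?_⟩
    have hpq : (p : ℚ) ≠ 0 := by exact_mod_cast hp.ne_zero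
    rw [zpow_one] at he
    rw [zpow_zero, one_mul]
    have : (p : ℚ) * (bernoulli r * b) = (p : ℚ) * a := by rw [← he]; ring
    exact mul_left_cancel₀ hpq this
  rw [key_decomp hp r]
  apply Mv.sub hp
  · obtain ⟨c, hc⟩ := zmod_sum_dvd hp hnd
    have : (∑ k ∈ Finset.range p, (k : ℚ) ^ r) = ((p : ℚ)) * (c : ℚ) := by
      have := congrArg (fun z : ℤ => (z : ℚ)) hc
      push_cast at this
      rw [← this]
    rw [this]
    exact ⟨c, 1, not_p_dvd_one hp, by rw [zpow_one]; ring⟩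
  · apply Mv.sum hp
    intro i hi
    have hi' : i < r := Finset.mem_range.mp hi
    have hB : Mv p 0 ((p : ℚ) * bernoulli i) := by
      have := (bernoulli_weak hp i).p_mul hp
      simpa using this
    have hC : Mv p 0 ((r.choose i : ℕ) : ℚ) := Mv.nat hp _
    have hm2 : 2 ≤ r + 1 - i := by omega
    have hF : Mv p 1 ((p : ℚ) ^ (r - i) / ((r + 1 - i : ℕ) : ℚ)) := by
      have h1 := Mv.p_pow_div hp (m := r + 1 - i) (by omega)
      have h2 : (1 : ℤ) ≤ ((r + 1 - i - 1 : ℕ) : ℤ) - (padicValNat p (r + 1 - i) : ℤ) := by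
        have := val_le_sub_two hp hodd hm2
        omega
      have h3 := h1.mono hp h2
      rwa [show r + 1 - i - 1 = r - i by omega] at h3
    have := (hB.mul hp hC).mul hp hF
    simpa using this

/-! ### Main assembly -/

lemma main_Mv (r l : ℕ) (hr : 2 ≤ r) (P : ℕ) (hP : P.Prime) :
    Mv P 0 ((Duniv (l * (r - 1)) : ℚ)
      * ((1 / (Nat.factorial l : ℚ)) * (bernoulli r / (Nat.factorial r : ℚ)) ^ l)) := by
  haveI : Fact P.Prime := ⟨hP⟩
  set n := l * (r - 1) with hn
  obtain ⟨kB, eD, hB, hdvd, hineq⟩ :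
      ∃ (kB : ℤ) (eD : ℕ), Mv P kB (bernoulli r) ∧ P ^ eD ∣ Duniv n ∧
        (padicValNat P (Nat.factorial l) : ℤ)
          + l * ((padicValNat P (Nat.factorial r) : ℤ) - kB) ≤ eD := by
    rcases eq_or_ne P 2 with rfl | hP2
    · refine ⟨-1, 3 * n + padicValNat 2 (Nat.factorial n), bernoulli_weak hP r,
        dvd_mul_right _ _, ?_⟩
      have h := case2 hr l
      rw [← hn] at h
      push_cast
      linarith
    · have hodd : 2 < P := by have := hP.two_le; omega
      rcases Nat.lt_or_ge P (n + 3) with hlt | hge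
      · have hmem : P ∈ Finset.filter (fun p => p.Prime ∧ p ≠ 2) (Finset.range (n + 3)) := by
          simp only [Finset.mem_filter, Finset.mem_range]
          exact ⟨hlt, hP, hP2⟩
        have hdvdP : P ^ Dexp P n ∣ Duniv n :=
          Dvd.dvd.mul_left (Finset.dvd_prod_of_mem _ hmem) _
        rcases em ((P - 1) ∣ r) with hdv | hdv
        · refine ⟨-1, Dexp P n, bernoulli_weak hP r, hdvdP, ?_⟩
          have h := caseB hP hodd hr hdv l
          rw [← hn] at h
          push_cast
          linarith
        · refine ⟨0, Dexp P n, bernoulli_strong hP hodd hdv, hdvdP, ?_⟩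
          have h := caseA hP hodd hr l
          rw [← hn] at h
          push_cast
          linarith
      · rcases Nat.eq_zero_or_pos l with rfl | hl
        · refine ⟨-1, 0, bernoulli_weak hP r, by simp, ?_⟩
          simp [Nat.factorial]
        · have hrn : r - 1 ≤ n := by rw [hn]; exact Nat.le_mul_of_pos_left _ hl
          have hrP : r < P := by omega
          have hlP : l < P := by
            have : l ≤ n := by rw [hn]; exact Nat.le_mul_of_pos_right l (by omega)
            omega
          have hnd : ¬ (P - 1) ∣ r := by
            intro hdv
            have := Nat.le_of_dvd (by omega) hdv
            omega
          refine ⟨0, 0, bernoulli_strong hP hodd hnd, by simp, ?_⟩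
          rw [fac_zero_of_lt hP hrP, fac_zero_of_lt hP hlP]
          simp
  have h1 := Mv.one_div_nat hP (c := Nat.factorial l) (Nat.factorial_ne_zero l)
  have h2 := Mv.one_div_nat hP (c := Nat.factorial r) (Nat.factorial_ne_zero r)
  have hBr : Mv P (kB + -(padicValNat P (Nat.factorial r) : ℤ))
      (bernoulli r / (Nat.factorial r : ℚ)) := by
    rw [div_eq_mul_one_div]
    exact hB.mul hP h2
  have hpow := hBr.pow hP l
  have hD := Mv.natCast hP hdvd
  have htot := hD.mul hP (h1.mul hP hpow)
  apply htot.mono hP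
  linarith [hineq]

lemma Duniv_ne_zero (n : ℕ) : (Duniv n : ℚ) ≠ 0 := by
  have h : Duniv n ≠ 0 := by
    apply Nat.mul_ne_zero
    · exact pow_ne_zero _ (by norm_num)
    · rw [Finset.prod_ne_zero_iff]
      intro P hmem
      simp only [Finset.mem_filter] at hmem
      exact pow_ne_zero _ hmem.2.1.ne_zero
  exact_mod_cast h

end BPaux

/-- For all `r ≥ 2` and `λ ≥ 0`, the rational number `(1/λ!) (B_r/r!)^λ` lies in
`(1/D_{λ(r-1)}) ℤ`. -/
theorem bernoulli_pow_div_factorial_mem (r l : ℕ) (hr : 2 ≤ r) :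
    ∃ m : ℤ, (1 / (Nat.factorial l : ℚ)) * (bernoulli r / (Nat.factorial r : ℚ)) ^ l =
      (m : ℚ) / (Duniv (l * (r - 1)) : ℚ) := by
  set n := l * (r - 1) with hn
  set X := (1 / (Nat.factorial l : ℚ)) * (bernoulli r / (Nat.factorial r : ℚ)) ^ l with hX
  set q := (Duniv n : ℚ) * X with hq
  have hDz : (Duniv n : ℚ) ≠ 0 := BPaux.Duniv_ne_zero n
  have hden : q.den = 1 := by
    rw [Nat.eq_one_iff_not_exists_prime_dvd]
    intro P hP hPden
    obtain ⟨a, b, hb, he⟩ := BPaux.main_Mv r l hr P hP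
    rw [← hn, ← hX, ← hq] at he
    rw [zpow_zero, one_mul] at he
    have hbz : (b : ℚ) ≠ 0 := by
      intro h0
      exact hb (by rw [show b = 0 from by exact_mod_cast h0]; exact dvd_zero _)
    have hq2 : q = (a : ℚ) / (b : ℚ) := (eq_div_iff hbz).mpr he
    have hdd : (q.den : ℤ) ∣ b := by
      have h3 := Rat.den_dvd a b
      rwa [Rat.divInt_eq_div, ← hq2] at h3
    exact hb (dvd_trans (Int.natCast_dvd_natCast.mpr hPden) hdd)
  refine ⟨q.num, ?_⟩
  have hqq : (q.num : ℚ) = q := by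
    conv_rhs => rw [← Rat.num_div_den q]
    rw [hden]
    simp
  rw [hqq, hq, mul_div_cancel_left₀ _ hDz]
end

section
/- Let q be a prime power (or more generally any positive integer), N ≥ 1, and let M be a symmetric N×N matrix with nonnegative integer entries such that every diagonal entry M_ii is even. Let K_j = Σ_i M_{ji} be the row sums. Then Σ_{i=1}^{N} ⌊M_{ii}/(2q)⌋ + Σ_{1≤i<j≤N} ⌊M_{ij}/q⌋ ≤ ⌊(1/2)·Σ_{j=1}^{N} ⌊K_j/q⌋⌋. -/
open scoped BigOperators

lemma sum_div_le' {α : Type*} (s : Finset α) (f : α → ℕ) (q : ℕ) (hq : 0 < q) :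
    ∑ i ∈ s, f i / q ≤ (∑ i ∈ s, f i) / q := by
  rw [Nat.le_div_iff_mul_le hq, Finset.sum_mul]
  exact Finset.sum_le_sum fun i _ => Nat.div_mul_le_self _ _

/-- For a symmetric `N × N` matrix `M` of nonnegative integers with even diagonal entries
and row sums `K j = Σ_i M j i`, and any positive integer `q`, one has
`Σ_i ⌊M_ii/(2q)⌋ + Σ_{i<j} ⌊M_ij/q⌋ ≤ ⌊(1/2) Σ_j ⌊K_j/q⌋⌋`. -/
theorem gaussian_denominator_ineq (q N : ℕ) (hq : 0 < q) (M : Fin N → Fin N → ℕ)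
    (hsym : ∀ i j, M i j = M j i) (hdiag : ∀ i, Even (M i i)) :
    (∑ i : Fin N, M i i / (2 * q)) + ∑ i : Fin N, ∑ j ∈ Finset.Ioi i, M i j / q ≤
      (∑ j : Fin N, (∑ i : Fin N, M j i) / q) / 2 := by
  set S := ∑ i : Fin N, ∑ j ∈ Finset.Ioi i, M i j / q with hS
  set d : Fin N → ℕ := fun i => M i i / q with hd
  -- step 1: each row: d i + contributions
  have key : (∑ i : Fin N, d i) + 2 * S ≤ ∑ j : Fin N, (∑ i : Fin N, M j i) / q := by
    have h1 : ∀ j : Fin N, ∑ i : Fin N, M j i / q ≤ (∑ i : Fin N, M j i) / q :=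
      fun j => sum_div_le' _ _ _ hq
    have h2 : (∑ j : Fin N, ∑ i : Fin N, M j i / q) = (∑ i : Fin N, d i) + 2 * S := by
      have split : ∀ i : Fin N, (∑ j : Fin N, M i j / q)
          = M i i / q + (∑ j ∈ Finset.Ioi i, M i j / q) + ∑ j ∈ Finset.Iio i, M i j / q := by
        intro i
        have : (Finset.univ : Finset (Fin N)) =
            insert i (Finset.Ioi i) ∪ Finset.Iio i := by
          ext x
          simp [Finset.mem_insert, lt_or_ge, le_iff_lt_or_eq, or_comm, eq_comm]
          omega
        have hdisj : Disjoint (insert i (Finset.Ioi i)) (Finset.Iio i) := by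
          simp only [Finset.disjoint_left, Finset.mem_insert, Finset.mem_Ioi, Finset.mem_Iio]
          rintro a (rfl | h) <;> omega
        rw [this, Finset.sum_union hdisj, Finset.sum_insert (by simp)]
      have swap : (∑ i : Fin N, ∑ j ∈ Finset.Iio i, M i j / q)
          = ∑ i : Fin N, ∑ j ∈ Finset.Ioi i, M j i / q := by
        exact Finset.sum_comm' (by intro x y; simp)
      have symS : (∑ i : Fin N, ∑ j ∈ Finset.Ioi i, M j i / q) = S := by
        rw [hS]; exact Finset.sum_congr rfl fun i _ =>
          Finset.sum_congr rfl fun j _ => by rw [hsym]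
      calc (∑ j : Fin N, ∑ i : Fin N, M j i / q)
          = ∑ i : Fin N, (M i i / q + (∑ j ∈ Finset.Ioi i, M i j / q)
              + ∑ j ∈ Finset.Iio i, M i j / q) := Finset.sum_congr rfl fun i _ => split i
        _ = (∑ i : Fin N, d i) + S + ∑ i : Fin N, ∑ j ∈ Finset.Iio i, M i j / q := by
              rw [Finset.sum_add_distrib, Finset.sum_add_distrib]
        _ = (∑ i : Fin N, d i) + 2 * S := by rw [swap, symS]; ring
    calc (∑ i : Fin N, d i) + 2 * S = ∑ j : Fin N, ∑ i : Fin N, M j i / q := h2.symm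
      _ ≤ _ := Finset.sum_le_sum fun j _ => h1 j
  -- step 2
  have lhs_le : (∑ i : Fin N, M i i / (2 * q)) + S ≤ ((∑ i : Fin N, d i) + 2 * S) / 2 := by
    have e : ∀ i : Fin N, M i i / (2 * q) = d i / 2 := by
      intro i; rw [hd, Nat.div_div_eq_div_mul, mul_comm]
    have : (∑ i : Fin N, M i i / (2 * q)) = ∑ i : Fin N, d i / 2 :=
      Finset.sum_congr rfl fun i _ => e i
    rw [this]
    have := sum_div_le' (Finset.univ : Finset (Fin N)) d 2 (by norm_num)
    calc (∑ i : Fin N, d i / 2) + S ≤ (∑ i : Fin N, d i) / 2 + S := by omega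
      _ = ((∑ i : Fin N, d i) + 2 * S) / 2 := by omega
  calc (∑ i : Fin N, M i i / (2 * q)) + S ≤ ((∑ i : Fin N, d i) + 2 * S) / 2 := lhs_le
    _ ≤ _ := Nat.div_le_div_right key
end

section
/- For each integer m, let H_m(q) = Σ_{n=0}^{N−1} (q;q)_n (q⁻¹;q⁻¹)_n q^{mn}, where q is a primitive N-th root of unity (the sum terminates since (q;q)_n = 0 for n ≥ N). Then the inhomogeneous three-term recursion q^{m+1} H_{m+1}(q) + (1 − 2q^m) H_m(q) + q^{m−1} H_{m−1}(q) = 1 holds for every m ∈ ℤ. -/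
open scoped BigOperators

/-- The q-Pochhammer symbol `(q;q)_n = ∏_{j=1}^{n} (1 - q^j)`. -/
noncomputable def qpoch (q : ℂ) (n : ℕ) : ℂ := ∏ j ∈ Finset.range n, (1 - q ^ (j + 1))

lemma qpoch_succ (q : ℂ) (n : ℕ) : qpoch q (n + 1) = qpoch q n * (1 - q ^ (n + 1)) :=
  Finset.prod_range_succ _ _

/-- The descendant Kashaev invariants
`H_m(q) = Σ_{n<N} (q;q)_n (q⁻¹;q⁻¹)_n q^{m n}` of the figure-eight knot at a primitive
`N`-th root of unity `q` satisfy the inhomogeneous three-term recursion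
`q^{m+1} H_{m+1} + (1 - 2 q^m) H_m + q^{m-1} H_{m-1} = 1` for all `m ∈ ℤ`. -/
theorem fig8_descendant_recursion (N : ℕ) (hN : 0 < N) (q : ℂ)
    (hq : IsPrimitiveRoot q N) (m : ℤ) :
    letI H : ℤ → ℂ := fun k => ∑ n ∈ Finset.range N, qpoch q n * qpoch q⁻¹ n * q ^ (k * (n : ℤ))
    q ^ (m + 1) * H (m + 1) + (1 - 2 * q ^ m) * H m + q ^ (m - 1) * H (m - 1) = 1 := by
  have hq0 : q ≠ 0 := hq.ne_zero hN.ne'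
  set H : ℤ → ℂ := fun k => ∑ n ∈ Finset.range N, qpoch q n * qpoch q⁻¹ n * q ^ (k * (n : ℤ)) with hH
  set f : ℕ → ℂ := fun n => qpoch q n * qpoch q⁻¹ n * q ^ (m * (n : ℤ)) with hf
  have key : ∀ n : ℕ,
      q ^ (m + 1) * (qpoch q n * qpoch q⁻¹ n * q ^ ((m + 1) * (n : ℤ)))
      + (1 - 2 * q ^ m) * (qpoch q n * qpoch q⁻¹ n * q ^ (m * (n : ℤ)))
      + q ^ (m - 1) * (qpoch q n * qpoch q⁻¹ n * q ^ ((m - 1) * (n : ℤ)))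
      = f n - f (n + 1) := by
    intro n
    simp only [hf]
    rw [qpoch_succ, qpoch_succ]
    have hy : q ^ (n : ℤ) ≠ 0 := zpow_ne_zero _ hq0
    have hyn : (q : ℂ) ^ (n + 1) ≠ 0 := pow_ne_zero _ hq0
    have e1 : (m + 1) * (n : ℤ) = m * n + n := by ring
    have e2 : (m - 1) * (n : ℤ) = m * n - n := by ring
    have e3 : m * (((n : ℕ) + 1 : ℕ) : ℤ) = m * n + m := by push_cast; ring
    rw [e1, e2, e3]
    simp only [zpow_add₀ hq0, zpow_sub₀ hq0, zpow_one, inv_pow]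
    field_simp
    simp only [zpow_natCast]
    ring
  have hsum : q ^ (m + 1) * H (m + 1) + (1 - 2 * q ^ m) * H m + q ^ (m - 1) * H (m - 1)
      = ∑ n ∈ Finset.range N, (f n - f (n + 1)) := by
    simp only [hH, Finset.mul_sum, ← Finset.sum_add_distrib]
    exact Finset.sum_congr rfl fun n _ => key n
  rw [hsum, Finset.sum_range_sub' f N]
  have hN0 : qpoch q N = 0 := by
    unfold qpoch
    apply Finset.prod_eq_zero (i := N - 1) (Finset.mem_range.2 (Nat.sub_lt hN one_pos))
    have hN1 : N - 1 + 1 = N := by omega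
    rw [hN1]
    simp [hq.pow_eq_one]
  simp only [hf]
  rw [hN0]
  simp [qpoch]
end
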